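/- arXiv:2410.08042 — 2 statements merged into one kernel-verified Lean document; each statement's English description precedes it below -/
import Mathlib

section
/- For every β > 0 there exists α ∈ (0,1) such that for all real numbers u₀₀, u₁₀, u₂₀, u₀₁, u₁₁, u₀₂: (u₁₀-u₀₀)² + (u₂₀-u₁₀)² ≤ α((u₁₀-u₀₀)² + (u₂₀-u₁₀)²) + β((u₁₁-u₀₁)² + (u₁₁-u₁₀)² + (u₀₁-u₀₂)² + (u₀₀-2u₁₀+u₂₀)² + (u₀₀-2u₀₁+u₀₂)²). -/
private lemma four_sq (a b c d : ℝ) : (a+b+c+d)^2 ≤ 4*(a^2+b^2+c^2+d^2) := by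
  nlinarith [sq_nonneg (a-b), sq_nonneg (a-c), sq_nonneg (a-d), sq_nonneg (b-c),
    sq_nonneg (b-d), sq_nonneg (c-d)]

private lemma two_sq (a b : ℝ) : (a+b)^2 ≤ 2*(a^2+b^2) := by nlinarith [sq_nonneg (a-b)]

theorem stmt_3 (β : ℝ) (hβ : 0 < β) :
    ∃ α ∈ Set.Ioo (0:ℝ) 1,
      ∀ u₀₀ u₁₀ u₂₀ u₀₁ u₁₁ u₀₂ : ℝ,
        (u₁₀ - u₀₀)^2 + (u₂₀ - u₁₀)^2 ≤
          α * ((u₁₀ - u₀₀)^2 + (u₂₀ - u₁₀)^2)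
          + β * ((u₁₁ - u₀₁)^2 + (u₁₁ - u₁₀)^2 + (u₀₁ - u₀₂)^2
              + (u₀₀ - 2*u₁₀ + u₂₀)^2 + (u₀₀ - 2*u₀₁ + u₀₂)^2) := by
  refine ⟨1 - min (β/14) (1/2), ⟨?_, ?_⟩, ?_⟩
  · have : min (β/14) (1/2) ≤ 1/2 := min_le_right _ _
    linarith
  · have : (0:ℝ) < min (β/14) (1/2) := lt_min (by linarith) (by norm_num)
    linarith
  · intro u₀₀ u₁₀ u₂₀ u₀₁ u₁₁ u₀₂
    set L := (u₁₀ - u₀₀)^2 + (u₂₀ - u₁₀)^2 with hL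
    set R := (u₁₁ - u₀₁)^2 + (u₁₁ - u₁₀)^2 + (u₀₁ - u₀₂)^2
              + (u₀₀ - 2*u₁₀ + u₂₀)^2 + (u₀₀ - 2*u₀₁ + u₀₂)^2 with hR
    have hL0 : 0 ≤ L := by positivity
    have hR0 : 0 ≤ R := by positivity
    have key : L ≤ 14 * R := by
      have ha : (u₁₀ - u₀₀)^2 ≤ 4*((u₁₁ - u₀₁)^2 + (-(u₁₁ - u₁₀))^2 + (-(u₀₁ - u₀₂))^2 + (-(u₀₀ - 2*u₀₁ + u₀₂))^2) := by
        have := four_sq (u₁₁ - u₀₁) (-(u₁₁ - u₁₀)) (-(u₀₁ - u₀₂)) (-(u₀₀ - 2*u₀₁ + u₀₂))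
        calc (u₁₀ - u₀₀)^2 = ((u₁₁ - u₀₁) + (-(u₁₁ - u₁₀)) + (-(u₀₁ - u₀₂)) + (-(u₀₀ - 2*u₀₁ + u₀₂)))^2 := by ring
          _ ≤ _ := this
      have hb : (u₂₀ - u₁₀)^2 ≤ 2*((u₁₀ - u₀₀)^2 + (u₀₀ - 2*u₁₀ + u₂₀)^2) := by
        have := two_sq (u₁₀ - u₀₀) (u₀₀ - 2*u₁₀ + u₂₀)
        calc (u₂₀ - u₁₀)^2 = ((u₁₀ - u₀₀) + (u₀₀ - 2*u₁₀ + u₂₀))^2 := by ring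
          _ ≤ _ := this
      have h5 : (0:ℝ) ≤ (u₀₀ - 2*u₁₀ + u₂₀)^2 := sq_nonneg _
      simp only [hL, hR, neg_sq] at *
      nlinarith [ha, hb]
    have hmin : min (β/14) (1/2) ≤ β/14 := min_le_left _ _
    have hmin0 : (0:ℝ) ≤ min (β/14) (1/2) := le_of_lt (lt_min (by linarith) (by norm_num))
    have : min (β/14) (1/2) * L ≤ (β/14) * (14 * R) :=
      mul_le_mul hmin key hL0 (by linarith)
    nlinarith
end

section
/- Let φ₀ ≥ 0 > φ₁ and u₀, u₁ ∈ ℝ with ū^φ := (φ₀ u₁ − φ₁ u₀)/(φ₀ − φ₁). For every ε > 0: u₀·(u₀ − u₁) ≤ (1/(2ε))·(ū^φ)² + (1 + ε/2)·(u₀ − u₁)², where we use the decomposition u₀ = (√(φ₀²+φ₁²)/(φ₀−φ₁))·(ū^φ·(φ₀−φ₁)/√(φ₀²+φ₁²)) + (φ₀/(φ₀−φ₁))·(u₀ − u₁). -/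
theorem stmt_19 (φ₀ φ₁ u₀ u₁ ε : ℝ) (h₀ : 0 ≤ φ₀) (h₁ : φ₁ < 0) (hε : 0 < ε) :
    u₀ * (u₀ - u₁) ≤
      (1/(2*ε)) * ((φ₀ * u₁ - φ₁ * u₀) / (φ₀ - φ₁))^2 + (1 + ε/2) * (u₀ - u₁)^2 := by
  have hD : 0 < φ₀ - φ₁ := by linarith
  set d := u₀ - u₁ with hd
  set v := (φ₀ * u₁ - φ₁ * u₀) / (φ₀ - φ₁) with hv
  have hdecomp : u₀ * d = v * d + (φ₀ / (φ₀ - φ₁)) * d ^ 2 := by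
    rw [hv, hd]; field_simp; ring
  have hθ : φ₀ / (φ₀ - φ₁) ≤ 1 := by
    rw [div_le_one hD]; linarith
  have hθ2 : (φ₀ / (φ₀ - φ₁)) * d ^ 2 ≤ d ^ 2 := by
    nlinarith [sq_nonneg d]
  have hY : v * d ≤ (1/(2*ε)) * v ^ 2 + (ε/2) * d ^ 2 := by
    have h2ε : (1/(2*ε)) * (2*ε) = 1 := by field_simp
    nlinarith [sq_nonneg (v - ε * d), mul_pos hε hε, sq_nonneg v,
      mul_nonneg (le_of_lt (by positivity : (0:ℝ) < 1/(2*ε))) (sq_nonneg (v - ε * d))]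
  nlinarith [hY, hθ2]
end
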